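/- arXiv:1303.4179 — 2 statements merged into one kernel-verified Lean document; each statement's English description precedes it below -/
import Mathlib

section
/- As h → 0⁺, the integral ∫_{[-1,1]²} (4h²/w₁²) sin²(w₁/h) (1 + w₁²/h²)² (1 + w₂²/h²)² dw₁ dw₂ equals 8/(15h⁶) + o(h⁻⁶). -/
/-!
Integrating over `w₂` first, the double integral factorises as `(∫ F) (∫ G)` with
`G(w) = (1 + w²/h²)²` and `F(w) = (4h²/w²) sin²(w/h) (1 + w²/h²)²`.
Here `h⁴ ∫ G = ∫ (h² + w²)² → ∫ w⁴ = 2/5`, while `h² F(w) = 4 w² sin²(w/h) + O(h²)` uniformly,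
because `sin²(w/h) ≤ w²/h²`. By the Riemann–Lebesgue lemma `sin²(w/h)` averages to `1/2` against
`w²`, so `h² ∫ F → 4 · 1/3`, and `h⁶` times the integral tends to `(4/3)(2/5) = 8/15`.
-/

open Asymptotics Filter Topology Real MeasureTheory intervalIntegral Set
open scoped Interval

section RiemannLebesgue

variable {f f' : ℝ → ℝ} {a b : ℝ}

theorem tendsto_integral_mul_cos_mul_atTop (hf : ∀ x ∈ [[a, b]], HasDerivAt f (f' x) x)
    (hf' : IntervalIntegrable f' volume a b) :
    Tendsto (fun k => ∫ x in a..b, f x * cos (k * x)) atTop (𝓝 0) := by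
  set C := |f b| + |f a| + |(∫ x in a..b, |f' x|)|
  have hsin : ∀ k, ∀ x ∈ [[a, b]], HasDerivAt (fun x => sin (k * x)) (cos (k * x) * k) x :=
    fun k x _ => by simpa using ((hasDerivAt_id x).const_mul k).sin
  have hibp : ∀ k, k * ∫ x in a..b, f x * cos (k * x)
      = f b * sin (k * b) - f a * sin (k * a) - ∫ x in a..b, f' x * sin (k * x) := by
    intro k
    rw [← intervalIntegral.integral_const_mul, ← intervalIntegral.integral_mul_deriv_eq_deriv_mul
      hf (hsin k) hf' ((by fun_prop : Continuous fun x => cos (k * x) * k).intervalIntegrable _ _)]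
    simp only [mul_left_comm k, mul_comm k]
  have hsin_le : ∀ c y, |c * sin y| ≤ |c| := fun c y => by
    rw [abs_mul]
    exact mul_le_of_le_one_right (abs_nonneg _) (abs_sin_le_one _)
  have hbound : ∀ k, |k * ∫ x in a..b, f x * cos (k * x)| ≤ C := by
    intro k
    have hrest : ‖∫ x in a..b, f' x * sin (k * x)‖ ≤ |(∫ x in a..b, |f' x|)| :=
      norm_integral_le_abs_of_norm_le (ae_of_all _ fun x => hsin_le (f' x) (k * x)) hf'.abs
    rw [hibp]
    exact (abs_sub _ _).trans (add_le_add ((abs_sub _ _).trans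
      (add_le_add (hsin_le _ _) (hsin_le _ _))) hrest)
  refine squeeze_zero_norm' (a := fun k => C / k) ?_ (tendsto_const_nhds.div_atTop tendsto_id)
  filter_upwards [eventually_gt_atTop 0] with k hk
  rw [Real.norm_eq_abs, le_div_iff₀ hk, mul_comm, ← abs_of_pos hk, ← abs_mul, abs_of_pos hk]
  exact hbound k

theorem tendsto_integral_mul_sin_mul_sq_atTop (hf : ∀ x ∈ [[a, b]], HasDerivAt f (f' x) x)
    (hf' : IntervalIntegrable f' volume a b) :
    Tendsto (fun k => ∫ x in a..b, f x * sin (k * x) ^ 2) atTop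
      (𝓝 ((∫ x in a..b, f x) / 2)) := by
  have hcont : ContinuousOn f [[a, b]] := fun x hx => (hf x hx).continuousAt.continuousWithinAt
  have hhalf : ∀ k, ∫ x in a..b, f x * sin (k * x) ^ 2
      = (∫ x in a..b, f x) / 2 - (∫ x in a..b, f x * cos (2 * k * x)) / 2 := by
    intro k
    have hpt : ∀ x, f x * sin (k * x) ^ 2 = f x / 2 - f x * cos (2 * k * x) / 2 := fun x => by
      rw [sin_sq_eq_half_sub, ← mul_assoc]
      ring
    simp_rw [hpt]
    rw [intervalIntegral.integral_sub, intervalIntegral.integral_div, intervalIntegral.integral_div]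
    · exact hcont.intervalIntegrable.div_const 2
    · exact ((hcont.mul (by fun_prop : Continuous _).continuousOn).intervalIntegrable).div_const 2
  simp_rw [hhalf]
  have hcos := (tendsto_integral_mul_cos_mul_atTop hf hf').comp
    (tendsto_id.const_mul_atTop (two_pos : (0 : ℝ) < 2))
  simpa using tendsto_const_nhds.sub (hcos.div_const 2)

end RiemannLebesgue

theorem tendsto_integral_sq_mul_sin_div_sq :
    Tendsto (fun h => ∫ w in (-1 : ℝ)..1, w ^ 2 * sin (w / h) ^ 2) (𝓝[>] 0) (𝓝 (1 / 3)) := by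
  have hw2 : ∀ x ∈ [[(-1 : ℝ), 1]], HasDerivAt (fun w : ℝ => w ^ 2) (2 * x) x :=
    fun x _ => by simpa using hasDerivAt_pow 2 x
  have hw2' : IntervalIntegrable (fun x : ℝ => 2 * x) volume (-1) 1 :=
    (by fun_prop : Continuous fun x : ℝ => 2 * x).intervalIntegrable _ _
  have hlim :=
    (tendsto_integral_mul_sin_mul_sq_atTop hw2 hw2').comp tendsto_inv_nhdsGT_zero
  simp only [integral_pow, Function.comp_def] at hlim
  norm_num at hlim
  simpa only [div_eq_inv_mul] using hlim

theorem sin_div_sq_mul_sq_div_sq_le_one (h w : ℝ) : sin (w / h) ^ 2 * (h ^ 2 / w ^ 2) ≤ 1 := by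
  rcases eq_or_ne w 0 with rfl | hw
  · simp
  rcases eq_or_ne h 0 with rfl | hh
  · simp
  calc sin (w / h) ^ 2 * (h ^ 2 / w ^ 2) ≤ (w / h) ^ 2 * (h ^ 2 / w ^ 2) :=
        mul_le_mul_of_nonneg_right sin_sq_le_sq (by positivity)
    _ = 1 := by field_simp

theorem sq_mul_first_factor_eq (h w : ℝ) (hh : h ≠ 0) :
    h ^ 2 * (4 * h ^ 2 / w ^ 2 * sin (w / h) ^ 2 * (1 + w ^ 2 / h ^ 2) ^ 2)
      = 4 * (w ^ 2 * sin (w / h) ^ 2) + 4 * h ^ 2 * sin (w / h) ^ 2 * (h ^ 2 / w ^ 2 + 2) := by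
  rcases eq_or_ne w 0 with rfl | hw
  · simp
  field_simp
  ring

theorem tendsto_sq_mul_integral_first_factor :
    Tendsto (fun h => h ^ 2 * ∫ w in (-1 : ℝ)..1,
        4 * h ^ 2 / w ^ 2 * sin (w / h) ^ 2 * (1 + w ^ 2 / h ^ 2) ^ 2)
      (𝓝[>] 0) (𝓝 (4 / 3)) := by
  set E : ℝ → ℝ → ℝ := fun h w => 4 * h ^ 2 * sin (w / h) ^ 2 * (h ^ 2 / w ^ 2 + 2)
  have hE_le : ∀ h w, ‖E h w‖ ≤ 12 * h ^ 2 := by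
    intro h w
    have h1 := sin_div_sq_mul_sq_div_sq_le_one h w
    have h2 := sin_sq_le_one (w / h)
    rw [Real.norm_of_nonneg (by positivity)]
    nlinarith [sq_nonneg h]
  have hE_int : ∀ h, IntervalIntegrable (E h) volume (-1) 1 := fun h =>
    intervalIntegrable_const.mono_fun' (by fun_prop : Measurable (E h)).aestronglyMeasurable
      (ae_of_all _ (hE_le h))
  have hE_lim : Tendsto (fun h => ∫ w in (-1 : ℝ)..1, E h w) (𝓝[>] 0) (𝓝 0) := by
    refine squeeze_zero_norm (fun h => norm_integral_le_of_norm_le_const fun w _ => hE_le h w) ?_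
    have : Continuous fun h : ℝ => 12 * h ^ 2 * |1 - (-1 : ℝ)| := by fun_prop
    simpa using (this.tendsto 0).mono_left nhdsWithin_le_nhds
  have hsplit : ∀ h ≠ 0, h ^ 2 * (∫ w in (-1 : ℝ)..1,
        4 * h ^ 2 / w ^ 2 * sin (w / h) ^ 2 * (1 + w ^ 2 / h ^ 2) ^ 2)
      = 4 * (∫ w in (-1 : ℝ)..1, w ^ 2 * sin (w / h) ^ 2) + ∫ w in (-1 : ℝ)..1, E h w := by
    intro h hh
    rw [← intervalIntegral.integral_const_mul, ← intervalIntegral.integral_const_mul,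
      ← intervalIntegral.integral_add _ (hE_int h)]
    · exact integral_congr fun w _ => sq_mul_first_factor_eq h w hh
    · exact (by fun_prop : Continuous fun w => 4 * (w ^ 2 * sin (w / h) ^ 2)).intervalIntegrable _ _
  have hlim := (tendsto_integral_sq_mul_sin_div_sq.const_mul 4).add hE_lim
  norm_num at hlim
  refine hlim.congr' ?_
  filter_upwards [self_mem_nhdsWithin] with h hh using (hsplit h (ne_of_gt hh)).symm

theorem tendsto_pow_four_mul_integral_second_factor :
    Tendsto (fun h => h ^ 4 * ∫ w in (-1 : ℝ)..1, (1 + w ^ 2 / h ^ 2) ^ 2)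
      (𝓝[>] 0) (𝓝 (2 / 5)) := by
  have heq : ∀ h ≠ (0 : ℝ), h ^ 4 * ∫ w in (-1 : ℝ)..1, (1 + w ^ 2 / h ^ 2) ^ 2
      = ∫ w in (-1 : ℝ)..1, (h ^ 2 + w ^ 2) ^ 2 := by
    intro h hh
    rw [← intervalIntegral.integral_const_mul]
    refine integral_congr fun w _ => ?_
    field_simp
  have hcont : Continuous fun h : ℝ => ∫ w in (-1 : ℝ)..1, (h ^ 2 + w ^ 2) ^ 2 :=
    continuous_parametric_intervalIntegral_of_continuous' (by fun_prop) _ _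
  have hlim := (hcont.tendsto 0).mono_left (nhdsWithin_le_nhds (s := Ioi 0))
  simp only [ne_eq, OfNat.ofNat_ne_zero, not_false_eq_true, zero_pow, zero_add, ← pow_mul,
    integral_pow] at hlim
  norm_num at hlim
  refine hlim.congr' ?_
  filter_upwards [self_mem_nhdsWithin] with h hh using (heq h (ne_of_gt hh)).symm

theorem isLittleO_sub_div_pow_of_tendsto_pow_mul {l : Filter ℝ} {f : ℝ → ℝ} {c : ℝ} {n : ℕ}
    (hl : ∀ᶠ h in l, h ≠ 0) (hf : Tendsto (fun h => h ^ n * f h) l (𝓝 c)) :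
    (fun h => f h - c / h ^ n) =o[l] fun h => 1 / h ^ n := by
  rw [isLittleO_iff_tendsto' (hl.mono fun h hh hzero => absurd hzero (by simp [hh]))]
  have hlim := hf.sub_const c
  rw [sub_self] at hlim
  refine hlim.congr' ?_
  filter_upwards [hl] with h hh
  field_simp

/-- As `h → 0⁺`,
`∫_{[-1,1]²} (4h²/w₁²) sin²(w₁/h)(1+w₁²/h²)²(1+w₂²/h²)² dw = 8/(15h⁶) + o(h⁻⁶)`. -/
theorem integral_example_A3 :
    (fun h : ℝ =>
        (∫ w₁ in (-1 : ℝ)..1, ∫ w₂ in (-1 : ℝ)..1,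
          (4 * h ^ 2 / w₁ ^ 2) * Real.sin (w₁ / h) ^ 2 *
            (1 + w₁ ^ 2 / h ^ 2) ^ 2 * (1 + w₂ ^ 2 / h ^ 2) ^ 2)
        - 8 / (15 * h ^ 6))
      =o[nhdsWithin 0 (Set.Ioi 0)] (fun h : ℝ => 1 / h ^ 6) := by
  have hne : ∀ᶠ h in 𝓝[>] (0 : ℝ), h ≠ 0 := eventually_mem_nhdsWithin.mono fun h hh => ne_of_gt hh
  have hprod := tendsto_sq_mul_integral_first_factor.mul tendsto_pow_four_mul_integral_second_factor
  norm_num at hprod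
  simp_rw [show ∀ h : ℝ, 8 / (15 * h ^ 6) = 8 / 15 / h ^ 6 from fun h => by ring]
  refine isLittleO_sub_div_pow_of_tendsto_pow_mul hne (hprod.congr fun h => ?_)
  simp only [intervalIntegral.integral_const_mul, intervalIntegral.integral_mul_const]
  ring
end

section
/- As h → 0⁺, the integral (∫_{[-1,1]} (4h²/w²) sin²(w/h)(1 + w²/h²)² dw)² equals 16/(9h⁴) + o(h⁻⁴). -/
/-!
Expanding `(1 + w²/h²)²`, the integrand is `4h² sin²(w/h)/w² + 8 sin²(w/h) + 4w² sin²(w/h)/h²`.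
The first two terms are bounded by `12` since `|sin x| ≤ |x|`, so they contribute `O(1)`.
In the last one, `sin² = (1 - cos(2·))/2` produces the main term `4/(3h²)` and a remainder
`(2/h²) ∫ w² cos(2w/h) dw`, which is `O(1/h)` after one integration by parts.
Hence the integral is `4/(3h²) + O(1/h)` and its square is `16/(9h⁴) + O(h⁻³)`.
-/

open Real MeasureTheory Asymptotics Filter Topology

theorem Asymptotics.IsLittleO.sq_sub_sq {α 𝕜 : Type*} [NormedField 𝕜] {l : Filter α}
    {f g : α → 𝕜} (hfg : (fun x => f x - g x) =o[l] g) :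
    (fun x => f x ^ 2 - g x ^ 2) =o[l] fun x => g x ^ 2 := by
  have hsum : (fun x => f x - g x + 2 * g x) =O[l] g :=
    hfg.isBigO.add (isBigO_const_mul_self 2 g l)
  simpa only [← sq, show ∀ x, (f x - g x) * (f x - g x + 2 * g x) = f x ^ 2 - g x ^ 2
    from fun x => by ring] using hfg.mul_isBigO hsum

theorem inv_isLittleO_inv_sq_nhdsGT_zero :
    (fun h : ℝ => h⁻¹) =o[𝓝[>] 0] fun h => (h ^ 2)⁻¹ := by
  simpa only [Function.comp_def, pow_one, inv_pow] using
    (isLittleO_pow_pow_atTop_of_lt (𝕜 := ℝ) one_lt_two).comp_tendsto tendsto_inv_nhdsGT_zero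

theorem sq_mul_sin_div_sq_div_sq_le_one (h w : ℝ) : h ^ 2 * sin (w / h) ^ 2 / w ^ 2 ≤ 1 := by
  rcases eq_or_ne h 0 with rfl | hh
  · simp
  rcases eq_or_ne w 0 with rfl | hw
  · simp
  rw [div_le_one (by positivity)]
  calc h ^ 2 * sin (w / h) ^ 2 ≤ h ^ 2 * (w / h) ^ 2 :=
        mul_le_mul_of_nonneg_left sin_sq_le_sq (by positivity)
    _ = w ^ 2 := by field_simp

theorem abs_integral_sq_mul_cos_div_le {h : ℝ} (hh : 0 < h) :
    |∫ w in (-1 : ℝ)..1, w ^ 2 * cos (w / h)| ≤ 6 * h := by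
  have hv : ∀ x, HasDerivAt (fun w => h * sin (w / h)) (cos (x / h)) x := fun x =>
    (((hasDerivAt_id' x).div_const h).sin.const_mul h).congr_deriv (by field_simp)
  have hsin : ∀ x, |h * sin (x / h)| ≤ h := fun x => by
    rw [abs_mul, abs_of_pos hh]
    exact mul_le_of_le_one_right hh.le (abs_sin_le_one _)
  have hrest : |∫ x in (-1 : ℝ)..1, 2 * x * (h * sin (x / h))| ≤ 4 * h := by
    have := intervalIntegral.norm_integral_le_of_norm_le_const (a := -1) (b := 1) (C := 2 * h)
      (f := fun x => 2 * x * (h * sin (x / h))) fun x hx => by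
        rw [Set.uIoc_of_le (by norm_num)] at hx
        rw [Real.norm_eq_abs, abs_mul, abs_mul, abs_two]
        have hx1 : |x| ≤ 1 := abs_le.2 ⟨hx.1.le, hx.2⟩
        nlinarith [hsin x, abs_nonneg x, abs_nonneg (h * sin (x / h))]
    norm_num at this
    linarith
  rw [intervalIntegral.integral_mul_deriv_eq_deriv_mul (u' := fun x => 2 * x)
    (fun x _ => by simpa using hasDerivAt_pow 2 x) (fun x _ => hv x)
    ((continuous_const.mul continuous_id).intervalIntegrable _ _)
    ((by fun_prop : Continuous fun x => cos (x / h)).intervalIntegrable _ _)]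
  have h1 := hsin 1
  have h2 := hsin (-1)
  calc _ ≤ |1 ^ 2 * (h * sin (1 / h))| + |(-1) ^ 2 * (h * sin (-1 / h))|
        + |∫ x in (-1 : ℝ)..1, 2 * x * (h * sin (x / h))| :=
        (abs_sub _ _).trans (add_le_add_left (abs_sub _ _) _)
    _ ≤ 6 * h := by simp only [one_pow, neg_one_sq, one_mul]; linarith

theorem integral_sq_mul_sin_div_sq (h : ℝ) :
    ∫ w in (-1 : ℝ)..1, w ^ 2 * sin (w / h) ^ 2
      = 1 / 3 - (∫ w in (-1 : ℝ)..1, w ^ 2 * cos (w / (h / 2))) / 2 := by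
  have hpt : ∀ w, w ^ 2 * sin (w / h) ^ 2 = w ^ 2 / 2 - w ^ 2 * cos (w / (h / 2)) / 2 := by
    intro w
    rw [sin_sq_eq_half_sub, show 2 * (w / h) = w / (h / 2) by ring]
    ring
  simp_rw [hpt]
  rw [intervalIntegral.integral_sub
      ((by fun_prop : Continuous fun w : ℝ => w ^ 2 / 2).intervalIntegrable _ _)
      ((by fun_prop : Continuous fun w => w ^ 2 * cos (w / (h / 2)) / 2).intervalIntegrable _ _),
    intervalIntegral.integral_div, intervalIntegral.integral_div, integral_pow]
  norm_num

noncomputable def weightedSincIntegral (h : ℝ) : ℝ :=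
  ∫ w in (-1 : ℝ)..1, (4 * h ^ 2 / w ^ 2) * sin (w / h) ^ 2 * (1 + w ^ 2 / h ^ 2) ^ 2

theorem abs_weightedSincIntegral_sub_le {h : ℝ} (hh : 0 < h) :
    |weightedSincIntegral h - 4 / (3 * h ^ 2)| ≤ 24 + 6 / h := by
  set R : ℝ → ℝ := fun w => 4 * (h ^ 2 * sin (w / h) ^ 2 / w ^ 2) + 8 * sin (w / h) ^ 2
  have hsplit : ∀ w, (4 * h ^ 2 / w ^ 2) * sin (w / h) ^ 2 * (1 + w ^ 2 / h ^ 2) ^ 2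
      = R w + 4 / h ^ 2 * (w ^ 2 * sin (w / h) ^ 2) := fun w => by
    rcases eq_or_ne w 0 with rfl | hw
    · simp [R]
    · simp only [R]; field_simp; ring
  have hR : ∀ w, ‖R w‖ ≤ 12 := fun w => by
    have := sq_mul_sin_div_sq_div_sq_le_one h w
    have := sin_sq_le_one (w / h)
    rw [Real.norm_eq_abs, abs_of_nonneg (by positivity)]
    linarith
  have hRint : IntervalIntegrable R volume (-1) 1 :=
    intervalIntegrable_iff.2 <| IntegrableOn.of_bound measure_Ioc_lt_top
      (by fun_prop : Measurable R).aestronglyMeasurable 12 (ae_of_all _ hR)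
  have hRbound : |∫ w in (-1 : ℝ)..1, R w| ≤ 24 := by
    have := intervalIntegral.norm_integral_le_of_norm_le_const (a := -1) (b := 1) fun w _ => hR w
    norm_num at this
    exact this
  have hJ := abs_integral_sq_mul_cos_div_le (half_pos hh)
  rw [weightedSincIntegral]
  simp_rw [hsplit]
  rw [intervalIntegral.integral_add hRint (Continuous.intervalIntegrable (by fun_prop) _ _),
    intervalIntegral.integral_const_mul, integral_sq_mul_sin_div_sq]
  set J := ∫ w in (-1 : ℝ)..1, w ^ 2 * cos (w / (h / 2))
  calc _ = |(∫ w in (-1 : ℝ)..1, R w) - 2 / h ^ 2 * J| := by congr 1; field_simp; ring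
    _ ≤ |∫ w in (-1 : ℝ)..1, R w| + |2 / h ^ 2 * J| := abs_sub _ _
    _ = |∫ w in (-1 : ℝ)..1, R w| + 2 / h ^ 2 * |J| := by
        rw [abs_mul, abs_of_pos (a := 2 / h ^ 2) (by positivity)]
    _ ≤ 24 + 2 / h ^ 2 * (6 * (h / 2)) := by gcongr
    _ = 24 + 6 / h := by field_simp

theorem isBigO_weightedSincIntegral_sub :
    (fun h => weightedSincIntegral h - 4 / (3 * h ^ 2)) =O[𝓝[>] 0] fun h => h⁻¹ := by
  refine IsBigO.of_bound 30 ?_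
  filter_upwards [Ioo_mem_nhdsGT one_pos] with h ⟨hh, h1⟩
  rw [Real.norm_eq_abs, Real.norm_eq_abs, abs_inv, abs_of_pos hh]
  refine (abs_weightedSincIntegral_sub_le hh).trans ?_
  have : 1 ≤ h⁻¹ := one_le_inv_iff₀.2 ⟨hh, h1.le⟩
  rw [div_eq_mul_inv]
  linarith

/-- As `h → 0⁺`, `(∫_{[-1,1]} (4h²/w²) sin²(w/h)(1+w²/h²)² dw)² = 16/(9h⁴) + o(h⁻⁴)`. -/
theorem integral_example_A5 :
    (fun h : ℝ =>
        (∫ w in (-1 : ℝ)..1,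
          (4 * h ^ 2 / w ^ 2) * Real.sin (w / h) ^ 2 * (1 + w ^ 2 / h ^ 2) ^ 2) ^ 2
        - 16 / (9 * h ^ 4))
      =o[nhdsWithin 0 (Set.Ioi 0)] (fun h : ℝ => 1 / h ^ 4) := by
  have hinv : (fun h : ℝ => (h ^ 2)⁻¹) =O[𝓝[>] 0] fun h => 4 / (3 * h ^ 2) :=
    (isBigO_const_mul_self (3 / 4 : ℝ) _ _).congr_left fun h => by field_simp
  have hsq := (isBigO_weightedSincIntegral_sub.trans_isLittleO
    (inv_isLittleO_inv_sq_nhdsGT_zero.trans_isBigO hinv)).sq_sub_sq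
  exact (hsq.congr (fun h => by rw [weightedSincIntegral]; ring) (fun h => by ring)).trans_isBigO
    (isBigO_const_mul_self (16 / 9 : ℝ) (fun h : ℝ => 1 / h ^ 4) _)
end
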